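/- arXiv:2109.03087 — 3 statements merged into one kernel-verified Lean document; each statement's English description precedes it below -/
import Mathlib

section
/- The estimator CFR(t) = (∑_{d=0}^t (∑_{i=1}^{c_d} M_{d,i}(t))/F_d(t−d)) / (∑_{d=0}^t c_d) is an unbiased estimator of cfr(t), i.e., E[CFR(t)] = cfr(t). -/
open MeasureTheory ProbabilityTheory Finset

/-- CFR(t) = (∑_d (∑_i M_{d,i}(t))/F_d(t−d)) / (∑_d c_d) is an
    unbiased estimator of cfr(t) = (∑_d c_d p_d)/(∑_d c_d). -/
theorem CFR_unbiased
    {Ω : Type*} [MeasureSpace Ω] [IsProbabilityMeasure (ℙ : Measure Ω)]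
    (t : ℕ) (c : ℕ → ℕ) (p : ℕ → ℝ) (F : ℕ → ℕ → ℝ) (M : ℕ → ℕ → Ω → ℝ)
    (hF : ∀ d ∈ Finset.range (t + 1), 0 < F d (t - d))
    (hint : ∀ d i, Integrable (M d i) ℙ)
    (hE : ∀ d ∈ Finset.range (t + 1), ∀ i ∈ Finset.range (c d),
      (∫ ω, M d i ω ∂ℙ) = p d * F d (t - d)) :
    (∫ ω, (∑ d ∈ Finset.range (t + 1),
        (∑ i ∈ Finset.range (c d), M d i ω) / F d (t - d)) /
        (∑ d ∈ Finset.range (t + 1), (c d : ℝ)) ∂ℙ)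
      = (∑ d ∈ Finset.range (t + 1), (c d : ℝ) * p d) /
        (∑ d ∈ Finset.range (t + 1), (c d : ℝ)) := by
  have hterm : ∀ d ∈ Finset.range (t + 1),
      Integrable (fun ω => (∑ i ∈ Finset.range (c d), M d i ω) / F d (t - d)) ℙ := by
    intro d _
    simpa [div_eq_mul_inv] using
      ((integrable_finset_sum (Finset.range (c d)) (fun i _ => hint d i)).mul_const
        (F d (t - d))⁻¹)
  rw [integral_div, integral_finset_sum _ hterm]
  congr 1
  refine Finset.sum_congr rfl fun d hd => ?_
  rw [integral_div, integral_finset_sum _ (fun i _ => hint d i),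
    Finset.sum_congr rfl (hE d hd), Finset.sum_const, Finset.card_range, nsmul_eq_mul,
    mul_div_assoc, mul_div_assoc, div_self (hF d hd).ne', mul_one]
end

section
/- Weak consistency of CFR(t): under assumption A1 and r_t → ∞, CFR(t) − cfr(t) converges to 0 in probability as t → ∞. -/
/-! CFR(t) is the average, over the r_t cases reported by day t, of the independent variables
M_{d,i}(t) / F_d(t-d). Each has mean p_d and, by A1, takes values in [0, D⁻¹], so by Popoviciu its
variance is at most 1 / (4D²). Hence CFR(t) has mean cfr(t) and variance at most 1 / (4D² r_t) → 0,
and Chebyshev's inequality concludes. -/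

open MeasureTheory ProbabilityTheory Finset Filter Topology

theorem div_mem_Icc_zero_inv {m f D : ℝ} (hm : m = 0 ∨ m = 1) (hD : 0 < D) (hf : D ≤ f) :
    m / f ∈ Set.Icc 0 D⁻¹ := by
  rcases hm with rfl | rfl
  · simpa using inv_nonneg.2 hD.le
  · rw [one_div]
    exact ⟨inv_nonneg.2 (hD.le.trans hf), inv_anti₀ hD hf⟩

section WeakLaw

variable {Ω ι κ : Type*} [MeasurableSpace Ω] {μ : Measure Ω}

theorem variance_average_le [IsProbabilityMeasure μ] {s : Finset κ} {X : κ → Ω → ℝ} {a b : ℝ}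
    (hX : ∀ i ∈ s, AEMeasurable (X i) μ) (hbd : ∀ i ∈ s, ∀ᵐ ω ∂μ, X i ω ∈ Set.Icc a b)
    (hindep : Set.Pairwise ↑s fun i j => X i ⟂ᵢ[μ] X j) :
    variance ((#s : ℝ)⁻¹ • ∑ i ∈ s, X i) μ ≤ (#s : ℝ)⁻¹ * ((b - a) / 2) ^ 2 := by
  have hL2 : ∀ i ∈ s, MemLp (X i) 2 μ := fun i hi =>
    memLp_of_bounded (hbd i hi) (hX i hi).aestronglyMeasurable 2
  have hvar_sum : ∑ i ∈ s, variance (X i) μ ≤ #s * ((b - a) / 2) ^ 2 := by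
    simpa using sum_le_card_nsmul s _ _ fun i hi => variance_le_sq_of_bounded (hbd i hi) (hX i hi)
  rw [variance_smul, IndepFun.variance_sum hL2 hindep]
  calc (#s : ℝ)⁻¹ ^ 2 * ∑ i ∈ s, variance (X i) μ
      ≤ (#s : ℝ)⁻¹ ^ 2 * (#s * ((b - a) / 2) ^ 2) := by gcongr
    _ = (#s : ℝ)⁻¹ * ((b - a) / 2) ^ 2 := by
      rcases eq_or_ne (#s : ℝ) 0 with h | h
      · simp [h]
      · field_simp

theorem tendsto_measure_abs_sub_integral_ge_of_tendsto_variance [IsFiniteMeasure μ] {l : Filter ι}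
    {Y : ι → Ω → ℝ} (hY : ∀ t, MemLp (Y t) 2 μ)
    (hvar : Tendsto (fun t => variance (Y t) μ) l (𝓝 0)) {ε : ℝ} (hε : 0 < ε) :
    Tendsto (fun t => μ {ω | ε ≤ |Y t ω - μ[Y t]|}) l (𝓝 0) := by
  have hbound : Tendsto (fun t => ENNReal.ofReal (variance (Y t) μ / ε ^ 2)) l (𝓝 0) := by
    simpa using ENNReal.tendsto_ofReal (hvar.div_const (ε ^ 2))
  exact tendsto_of_tendsto_of_tendsto_of_le_of_le tendsto_const_nhds hbound
    (fun _ => zero_le) fun t => meas_ge_le_variance_div_sq (hY t) hε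

theorem tendsto_measure_abs_average_sub_average_ge [IsProbabilityMeasure μ] {l : Filter ι}
    {T : ι → Finset κ} {X : ι → κ → Ω → ℝ} {m : ι → κ → ℝ} {a b : ℝ}
    (hX : ∀ t, ∀ i ∈ T t, AEMeasurable (X t i) μ)
    (hbd : ∀ t, ∀ i ∈ T t, ∀ᵐ ω ∂μ, X t i ω ∈ Set.Icc a b)
    (hindep : ∀ t, Set.Pairwise ↑(T t) fun i j => X t i ⟂ᵢ[μ] X t j)
    (hmean : ∀ t, ∀ i ∈ T t, μ[X t i] = m t i)
    (hcard : Tendsto (fun t => (#(T t) : ℝ)) l atTop) {ε : ℝ} (hε : 0 < ε) :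
    Tendsto (fun t => μ {ω | ε ≤
      |(#(T t) : ℝ)⁻¹ * ∑ i ∈ T t, X t i ω - (#(T t) : ℝ)⁻¹ * ∑ i ∈ T t, m t i|}) l (𝓝 0) := by
  set A : ι → Ω → ℝ := fun t => (#(T t) : ℝ)⁻¹ • ∑ i ∈ T t, X t i
  have hX_L2 : ∀ t, ∀ i ∈ T t, MemLp (X t i) 2 μ := fun t i hi =>
    memLp_of_bounded (hbd t i hi) (hX t i hi).aestronglyMeasurable 2
  have hA_L2 : ∀ t, MemLp (A t) 2 μ := fun t =>
    (memLp_finsetSum' _ (hX_L2 t)).const_smul _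
  have hA_mean : ∀ t, μ[A t] = (#(T t) : ℝ)⁻¹ * ∑ i ∈ T t, m t i := fun t => by
    simp only [A, Pi.smul_apply, Finset.sum_apply, smul_eq_mul]
    rw [integral_const_mul, integral_finsetSum _ fun i hi => (hX_L2 t i hi).integrable one_le_two,
      sum_congr rfl (hmean t)]
  have hA_var : Tendsto (fun t => variance (A t) μ) l (𝓝 0) :=
    tendsto_of_tendsto_of_tendsto_of_le_of_le tendsto_const_nhds
      (by simpa using hcard.inv_tendsto_atTop.mul_const (((b - a) / 2) ^ 2))
      (fun t => variance_nonneg _ _) fun t => variance_average_le (hX t) (hbd t) (hindep t)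
  have h := tendsto_measure_abs_sub_integral_ge_of_tendsto_variance hA_L2 hA_var hε
  simp only [hA_mean] at h
  simpa [A] using h

end WeakLaw

theorem CFR_consistent_general
    {Ω : Type*} [MeasureSpace Ω] [IsProbabilityMeasure (ℙ : Measure Ω)]
    (c : ℕ → ℕ) (p : ℕ → ℝ) (F : ℕ → ℕ → ℝ) (D : ℝ)
    (M : ℕ → ℕ → ℕ → Ω → ℝ)  -- M t d i : death-by-day-t indicator
    (r : ℕ → ℝ) (CFR : ℕ → Ω → ℝ) (cfr : ℕ → ℝ)
    (hr : ∀ t, r t = ∑ d ∈ Finset.range (t + 1), (c d : ℝ))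
    (hCFR : ∀ t ω, CFR t ω = (∑ d ∈ Finset.range (t + 1),
        ∑ i ∈ Finset.range (c d), M t d i ω / F d (t - d)) / r t)
    (hcfr : ∀ t, cfr t = (∑ d ∈ Finset.range (t + 1), (c d : ℝ) * p d) / r t)
    (hMmeas : ∀ t d i, Measurable (M t d i))
    (hM01 : ∀ t d i ω, M t d i ω = 0 ∨ M t d i ω = 1)
    (hE : ∀ t, ∀ d ∈ Finset.range (t + 1), ∀ i ∈ Finset.range (c d),
      (∫ ω, M t d i ω ∂ℙ) = p d * F d (t - d))
    (hIndep : ∀ t, iIndepFun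
      (fun di : ℕ × ℕ => M t di.1 di.2) ℙ)
    -- A1 : inf_d F_d(0) = D > 0, F_d nondecreasing
    (hD : 0 < D) (hD0 : ∀ d, D ≤ F d 0) (hFmono : ∀ d, Monotone (F d))
    (hrinf : Tendsto r atTop atTop) :
    ∀ ε > (0 : ℝ),
      Tendsto (fun t => ℙ {ω | ε ≤ |CFR t ω - cfr t|}) atTop (nhds 0) := by
  intro ε hε
  have hF : ∀ d k, D ≤ F d k := fun d k => (hD0 d).trans (hFmono d k.zero_le)
  set T : ℕ → Finset (Σ _ : ℕ, ℕ) := fun t => (range (t + 1)).sigma fun d => range (c d)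
  set X : ℕ → (Σ _ : ℕ, ℕ) → Ω → ℝ := fun t x ω => M t x.1 x.2 ω / F x.1 (t - x.1)
  have hrT : ∀ t, r t = #(T t) := by simp [hr, T, card_sigma]
  have hCFR_avg : ∀ t ω, CFR t ω = (#(T t) : ℝ)⁻¹ * ∑ x ∈ T t, X t x ω := fun t ω => by
    rw [hCFR, hrT, div_eq_inv_mul, sum_sigma']
  have hcfr_avg : ∀ t, cfr t = (#(T t) : ℝ)⁻¹ * ∑ x ∈ T t, p x.1 := fun t => by
    simp [hcfr, hrT, div_eq_inv_mul, T, sum_sigma, mul_comm]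
  have hX_mean : ∀ t, ∀ x ∈ T t, ℙ[X t x] = p x.1 := fun t x hx => by
    obtain ⟨hd, hi⟩ := mem_sigma.1 hx
    rw [integral_div, hE t x.1 hd x.2 hi, mul_div_cancel_right₀ _ (hD.trans_le (hF _ _)).ne']
  have hX_indep : ∀ t, Set.Pairwise ↑(T t) fun x y => X t x ⟂ᵢ[ℙ] X t y := fun t x _ y _ hxy =>
    ((hIndep t).indepFun ((Equiv.sigmaEquivProd ℕ ℕ).injective.ne hxy)).comp
      (measurable_id.div_const _) (measurable_id.div_const _)
  simp only [hCFR_avg, hcfr_avg]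
  exact tendsto_measure_abs_average_sub_average_ge
    (fun t x _ => ((hMmeas t x.1 x.2).div_const _).aemeasurable)
    (fun t x _ => .of_forall fun ω => div_mem_Icc_zero_inv (hM01 t x.1 x.2 ω) hD (hF _ _))
    hX_indep hX_mean ((tendsto_congr hrT).1 hrinf) hε

/-- weak consistency of CFR(t): under A1 and r_t → ∞,
    CFR(t) − cfr(t) → 0 in probability as t → ∞. -/
theorem CFR_consistent
    {Ω : Type*} [MeasureSpace Ω] [IsProbabilityMeasure (ℙ : Measure Ω)]
    (c : ℕ → ℕ) (p : ℕ → ℝ) (F : ℕ → ℕ → ℝ) (D : ℝ)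
    (M : ℕ → ℕ → ℕ → Ω → ℝ)  -- M t d i : death-by-day-t indicator
    (r : ℕ → ℝ) (CFR : ℕ → Ω → ℝ) (cfr : ℕ → ℝ)
    (hr : ∀ t, r t = ∑ d ∈ Finset.range (t + 1), (c d : ℝ))
    (hCFR : ∀ t ω, CFR t ω = (∑ d ∈ Finset.range (t + 1),
        ∑ i ∈ Finset.range (c d), M t d i ω / F d (t - d)) / r t)
    (hcfr : ∀ t, cfr t = (∑ d ∈ Finset.range (t + 1), (c d : ℝ) * p d) / r t)
    (hMmeas : ∀ t d i, Measurable (M t d i))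
    (hM01 : ∀ t d i ω, M t d i ω = 0 ∨ M t d i ω = 1)
    (hE : ∀ t, ∀ d ∈ Finset.range (t + 1), ∀ i ∈ Finset.range (c d),
      (∫ ω, M t d i ω ∂ℙ) = p d * F d (t - d))
    (hIndep : ∀ t, iIndepFun
      (fun di : ℕ × ℕ => M t di.1 di.2) ℙ)
    -- A1 : inf_d F_d(0) = D > 0, F_d nondecreasing
    (hD : 0 < D) (hD0 : ∀ d, D ≤ F d 0) (hFmono : ∀ d, Monotone (F d))
    (hF1 : ∀ d k, F d k ≤ 1) (hp0 : ∀ d, 0 ≤ p d) (hp1 : ∀ d, p d ≤ 1)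
    (hrinf : Tendsto r atTop atTop) :
    ∀ ε > (0 : ℝ),
      Tendsto (fun t => ℙ {ω | ε ≤ |CFR t ω - cfr t|}) atTop (nhds 0) :=
  CFR_consistent_general c p F D M r CFR cfr hr hCFR hcfr hMmeas hM01 hE hIndep hD hD0 hFmono hrinf
end

section
/- Under assumptions A1–A3 and r_t → ∞, the triangular array X_{t,k} given by the centered variables Z_{d,i}(t) − p_d satisfies the Lindeberg condition: for every ε > 0, lim_{t→∞} (1/σ_t²) ∑_{d=0}^t ∑_{i=1}^{c_d} E[(Z_{d,i}(t) − p_d)² · 1{|Z_{d,i}(t) − p_d| > ε σ_t}] = 0. -/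
open MeasureTheory ProbabilityTheory Finset Filter

/-!
Each `Z_{d,i}(t)` takes only the values `0` and `1 / F_d(t - d) ≤ 1 / D`, and `p_d ≤ 1`, so
`|Z_{d,i}(t) - p_d| ≤ 1 / D` uniformly. On the other hand
`Var Z_{d,i}(t) = p_d (1 - p_d F_d(t - d)) / F_d(t - d) ≥ p_d (1 - p_d) ≥ I (1 - S)`, hence
`σ_t² ≥ I (1 - S) r_t → ∞`. Once `ε σ_t ≥ 1 / D` every indicator in the Lindeberg sum vanishes,
so the sums are eventually `0`.
-/

section ZeroOne

variable {Ω : Type*} [MeasurableSpace Ω] {μ : Measure Ω} [IsProbabilityMeasure μ]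

theorem variance_eq_integral_mul_one_sub_of_zero_or_one {X : Ω → ℝ} (hX : Measurable X)
    (h01 : ∀ ω, X ω = 0 ∨ X ω = 1) : variance X μ = μ[X] * (1 - μ[X]) := by
  have hbound : ∀ ω, ‖X ω‖ ≤ 1 := fun ω => by rcases h01 ω with h | h <;> simp [h]
  have hsq : X ^ 2 = X := funext fun ω => by rcases h01 ω with h | h <;> simp [h]
  rw [variance_eq_sub (MemLp.of_bound hX.aestronglyMeasurable 1 (ae_of_all _ hbound)), hsq]
  ring

theorem mul_one_sub_le_variance_div_of_zero_or_one {X : Ω → ℝ} {f q : ℝ} (hX : Measurable X)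
    (h01 : ∀ ω, X ω = 0 ∨ X ω = 1) (hf0 : 0 < f) (hf1 : f ≤ 1) (hq : 0 ≤ q)
    (hmean : μ[X] = q * f) : q * (1 - q) ≤ variance (fun ω => X ω / f) μ := by
  have hvar : variance (fun ω => X ω / f) μ = q * (1 - q * f) / f := by
    simp_rw [div_eq_mul_inv, variance_mul_const,
      variance_eq_integral_mul_one_sub_of_zero_or_one hX h01, hmean]
    field_simp
  rw [hvar, le_div_iff₀ hf0]
  nlinarith [mul_nonneg hq (sub_nonneg.mpr hf1)]

end ZeroOne

theorem abs_div_sub_le_one_div_of_zero_or_one {m f q : ℝ} (hm : m = 0 ∨ m = 1) (hf0 : 0 < f)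
    (hf1 : f ≤ 1) (hq0 : 0 ≤ q) (hq1 : q ≤ 1) : |m / f - q| ≤ 1 / f := by
  have hinv : 1 ≤ 1 / f := by rw [le_div_iff₀ hf0]; linarith
  rcases hm with rfl | rfl
  · rw [zero_div, zero_sub, abs_neg, abs_of_nonneg hq0]; linarith
  · rw [abs_of_nonneg (by linarith)]; linarith

theorem integral_ite_lt_abs_eq_zero {Ω : Type*} [MeasurableSpace Ω] (μ : Measure Ω)
    {Y : Ω → ℝ} {a : ℝ} (hY : ∀ ω, |Y ω| ≤ a) :
    ∫ ω, (if a < |Y ω| then Y ω ^ 2 else 0) ∂μ = 0 := by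
  simp [fun ω => not_lt.mpr (hY ω)]

theorem tendsto_atTop_of_mul_le_sq {α : Type*} {l : Filter α} {σ r : α → ℝ} {κ : ℝ}
    (hκ : 0 < κ) (hσ : ∀ t, 0 ≤ σ t) (hσr : ∀ t, κ * r t ≤ σ t ^ 2) (hr : Tendsto r l atTop) :
    Tendsto σ l atTop :=
  (Real.tendsto_sqrt_atTop.comp (tendsto_atTop_mono hσr (hr.const_mul_atTop hκ))).congr
    fun t => Real.sqrt_sq (hσ t)

theorem mul_sum_card_le_sum_sum {α : Type*} {s : Finset α} {n : α → ℕ} {v : α → ℕ → ℝ} {κ : ℝ}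
    (hv : ∀ d ∈ s, ∀ i ∈ range (n d), κ ≤ v d i) :
    κ * ∑ d ∈ s, (n d : ℝ) ≤ ∑ d ∈ s, ∑ i ∈ range (n d), v d i := by
  rw [mul_sum]
  refine sum_le_sum fun d hd => ?_
  calc κ * n d = ∑ _i ∈ range (n d), κ := by simp [mul_comm]
    _ ≤ _ := sum_le_sum (hv d hd)

theorem lindeberg_condition_general
    {Ω : Type*} [MeasureSpace Ω] [IsProbabilityMeasure (ℙ : Measure Ω)]
    (c : ℕ → ℕ) (p : ℕ → ℝ) (F : ℕ → ℕ → ℝ) (D I S : ℝ)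
    (M : ℕ → ℕ → ℕ → Ω → ℝ) (Z : ℕ → ℕ → ℕ → Ω → ℝ) (r σ : ℕ → ℝ)
    (hr : ∀ t, r t = ∑ d ∈ Finset.range (t + 1), (c d : ℝ))
    (hZ : ∀ t d i ω, Z t d i ω = M t d i ω / F d (t - d))
    (hMmeas : ∀ t d i, Measurable (M t d i))
    (hM01 : ∀ t d i ω, M t d i ω = 0 ∨ M t d i ω = 1)
    (hE : ∀ t, ∀ d ∈ Finset.range (t + 1), ∀ i ∈ Finset.range (c d),
      (∫ ω, M t d i ω ∂ℙ) = p d * F d (t - d))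
    -- A1
    (hD : 0 < D) (hD0 : ∀ d, D ≤ F d 0) (hFmono : ∀ d, Monotone (F d))
    (hF1 : ∀ d k, F d k ≤ 1)
    -- A2 and A3
    (hI : 0 < I) (hIp : ∀ d, I ≤ p d) (hS : S < 1) (hpS : ∀ d, p d ≤ S)
    (hσ : ∀ t, 0 ≤ σ t)
    (hσ2 : ∀ t, σ t ^ 2 = ∑ d ∈ Finset.range (t + 1),
        ∑ i ∈ Finset.range (c d), variance (Z t d i) ℙ)
    (hrinf : Tendsto r atTop atTop) :
    ∀ ε > (0 : ℝ),
      Tendsto (fun t => (1 / σ t ^ 2) *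
        ∑ d ∈ Finset.range (t + 1), ∑ i ∈ Finset.range (c d),
          ∫ ω, (if ε * σ t < |Z t d i ω - p d|
                then (Z t d i ω - p d) ^ 2 else 0) ∂ℙ)
        atTop (nhds 0) := by
  intro ε hε
  have hDF : ∀ d k, D ≤ F d k := fun d k => (hD0 d).trans (hFmono d k.zero_le)
  have hFpos : ∀ d k, 0 < F d k := fun d k => hD.trans_le (hDF d k)
  have hp0 : ∀ d, 0 ≤ p d := fun d => hI.le.trans (hIp d)
  have hp1 : ∀ d, p d ≤ 1 := fun d => (hpS d).trans hS.le
  have hbound : ∀ t d i ω, |Z t d i ω - p d| ≤ 1 / D := fun t d i ω => by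
    rw [hZ]
    exact (abs_div_sub_le_one_div_of_zero_or_one (hM01 t d i ω) (hFpos d _) (hF1 d _) (hp0 d)
      (hp1 d)).trans (one_div_le_one_div_of_le hD (hDF d _))
  have hvar : ∀ t, ∀ d ∈ range (t + 1), ∀ i ∈ range (c d), I * (1 - S) ≤ variance (Z t d i) ℙ :=
    fun t d hd i hi => by
      rw [show Z t d i = _ from funext (hZ t d i)]
      calc I * (1 - S) ≤ p d * (1 - p d) :=
            mul_le_mul (hIp d) (by linarith [hpS d]) (by linarith) (hp0 d)
        _ ≤ _ := mul_one_sub_le_variance_div_of_zero_or_one (hMmeas t d i) (hM01 t d i)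
            (hFpos d _) (hF1 d _) (hp0 d) (hE t d hd i hi)
  have hσr : ∀ t, I * (1 - S) * r t ≤ σ t ^ 2 := fun t => by
    rw [hσ2, hr]
    exact mul_sum_card_le_sum_sum (hvar t)
  have hσtop := tendsto_atTop_of_mul_le_sq (mul_pos hI (by linarith)) hσ hσr hrinf
  refine tendsto_const_nhds.congr' ?_
  filter_upwards [(hσtop.const_mul_atTop hε).eventually_ge_atTop (1 / D)] with t ht
  simp only [fun d i => integral_ite_lt_abs_eq_zero ℙ fun ω => (hbound t d i ω).trans ht,
    sum_const_zero, mul_zero]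

/-- under A1–A3 and r_t → ∞, the triangular array of centered
    variables Z_{d,i}(t) − p_d satisfies the Lindeberg condition. -/
theorem lindeberg_condition
    {Ω : Type*} [MeasureSpace Ω] [IsProbabilityMeasure (ℙ : Measure Ω)]
    (c : ℕ → ℕ) (p : ℕ → ℝ) (F : ℕ → ℕ → ℝ) (D I S : ℝ)
    (M : ℕ → ℕ → ℕ → Ω → ℝ) (Z : ℕ → ℕ → ℕ → Ω → ℝ) (r σ : ℕ → ℝ)
    (hr : ∀ t, r t = ∑ d ∈ Finset.range (t + 1), (c d : ℝ))
    (hZ : ∀ t d i ω, Z t d i ω = M t d i ω / F d (t - d))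
    (hMmeas : ∀ t d i, Measurable (M t d i))
    (hM01 : ∀ t d i ω, M t d i ω = 0 ∨ M t d i ω = 1)
    (hE : ∀ t, ∀ d ∈ Finset.range (t + 1), ∀ i ∈ Finset.range (c d),
      (∫ ω, M t d i ω ∂ℙ) = p d * F d (t - d))
    (hIndep : ∀ t, iIndepFun
      (fun di : ℕ × ℕ => M t di.1 di.2) ℙ)
    -- A1
    (hD : 0 < D) (hD0 : ∀ d, D ≤ F d 0) (hFmono : ∀ d, Monotone (F d))
    (hF1 : ∀ d k, F d k ≤ 1)
    -- A2 and A3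
    (hI : 0 < I) (hIp : ∀ d, I ≤ p d) (hS : S < 1) (hpS : ∀ d, p d ≤ S)
    (hσ : ∀ t, 0 ≤ σ t)
    (hσ2 : ∀ t, σ t ^ 2 = ∑ d ∈ Finset.range (t + 1),
        ∑ i ∈ Finset.range (c d), variance (Z t d i) ℙ)
    (hrinf : Tendsto r atTop atTop) :
    ∀ ε > (0 : ℝ),
      Tendsto (fun t => (1 / σ t ^ 2) *
        ∑ d ∈ Finset.range (t + 1), ∑ i ∈ Finset.range (c d),
          ∫ ω, (if ε * σ t < |Z t d i ω - p d|
                then (Z t d i ω - p d) ^ 2 else 0) ∂ℙ)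
        atTop (nhds 0) :=
  lindeberg_condition_general c p F D I S M Z r σ hr hZ hMmeas hM01 hE hD hD0 hFmono hF1 hI hIp hS
    hpS hσ hσ2 hrinf
end
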